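/- For any graph G, vertices u, v and depth ℓ ≥ 0: two vertices receive the same 1-WL color after ℓ rounds (starting from a common constant initial coloring) if and only if their depth-ℓ unfolding trees are isomorphic as rooted trees. -/

import Mathlib

/-!
The WL color of a vertex after `ℓ` rounds and its depth-`ℓ` unfolding tree determine each other.
Forgetting the first component of every color pair, recursively, turns the color into the tree.
Conversely, the color after `ℓ + 1` rounds is the pair of the previous color, recovered from the
depth-`ℓ` truncation of the tree, and the multiset of the neighbors' colors, recovered from the
root's subtrees; with a constant initial coloring nothing else is needed at depth `0`.
-/

open scoped Classical

namespace RSNN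

/-- The type of (free, injectively-hashed) 1-WL colors after `t` rounds. -/
def WLColorType (σ : Type) : ℕ → Type
  | 0 => σ
  | t + 1 => WLColorType σ t × Multiset (WLColorType σ t)

/-- The 1-dimensional Weisfeiler–Lehman color refinement: round `t+1` (injectively)
hashes the current color of `u` with the multiset of its neighbors' colors. -/
noncomputable def WL {V : Type} [Fintype V] [DecidableEq V]
    (G : SimpleGraph V) [DecidableRel G.Adj] {σ : Type} (π0 : V → σ) :
    (t : ℕ) → V → WLColorType σ t
  | 0 => π0
  | t + 1 => fun u => (WL G π0 t u, (G.neighborFinset u).val.map (WL G π0 t))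

/-- Rooted-tree shapes of depth at most `ℓ`, with children collected as a multiset,
so that equality of values is exactly rooted-tree isomorphism. -/
def UT : ℕ → Type
  | 0 => Unit
  | ℓ + 1 => Multiset (UT ℓ)

/-- The depth-`ℓ` unfolding tree of `G` rooted at `u`, as a rooted tree shape:
the root's children are fresh copies of the depth-`(ℓ-1)` unfolding trees of the
neighbors of `u`. -/
noncomputable def unfoldT {V : Type} [Fintype V] [DecidableEq V]
    (G : SimpleGraph V) [DecidableRel G.Adj] : (ℓ : ℕ) → V → UT ℓ
  | 0 => fun _ => ()
  | ℓ + 1 => fun u => (G.neighborFinset u).val.map (unfoldT G ℓ)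

def WLColorType.toUT {σ : Type} : (ℓ : ℕ) → WLColorType σ ℓ → UT ℓ
  | 0 => fun _ => ()
  | ℓ + 1 => fun p => p.2.map (WLColorType.toUT ℓ)

def UT.trunc : (ℓ : ℕ) → UT (ℓ + 1) → UT ℓ
  | 0 => fun _ => ()
  | ℓ + 1 => fun T => (T : Multiset (UT (ℓ + 1))).map (UT.trunc ℓ)

def UT.toWLColor {σ : Type} (c : σ) : (ℓ : ℕ) → UT ℓ → WLColorType σ ℓ
  | 0 => fun _ => c
  | ℓ + 1 => fun T =>
      (UT.toWLColor c ℓ (UT.trunc ℓ T), (T : Multiset (UT ℓ)).map (UT.toWLColor c ℓ))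

section

variable {V : Type} [Fintype V] [DecidableEq V] (G : SimpleGraph V) [DecidableRel G.Adj]

theorem WLColorType.toUT_WL {σ : Type} (π0 : V → σ) (ℓ : ℕ) (u : V) :
    WLColorType.toUT ℓ (WL G π0 ℓ u) = unfoldT G ℓ u := by
  induction ℓ generalizing u with
  | zero => rfl
  | succ ℓ ih =>
    show ((G.neighborFinset u).val.map (WL G π0 ℓ)).map (WLColorType.toUT ℓ)
        = (G.neighborFinset u).val.map (unfoldT G ℓ)
    rw [Multiset.map_map]
    exact Multiset.map_congr rfl fun w _ => ih w

theorem UT.trunc_unfoldT (ℓ : ℕ) (u : V) :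
    UT.trunc ℓ (unfoldT G (ℓ + 1) u) = unfoldT G ℓ u := by
  induction ℓ generalizing u with
  | zero => rfl
  | succ ℓ ih =>
    show ((G.neighborFinset u).val.map (unfoldT G (ℓ + 1))).map (UT.trunc ℓ)
        = (G.neighborFinset u).val.map (unfoldT G ℓ)
    rw [Multiset.map_map]
    exact Multiset.map_congr rfl fun w _ => ih w

theorem UT.toWLColor_unfoldT {σ : Type} (c : σ) (ℓ : ℕ) (u : V) :
    UT.toWLColor c ℓ (unfoldT G ℓ u) = WL G (fun _ => c) ℓ u := by
  induction ℓ generalizing u with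
  | zero => rfl
  | succ ℓ ih =>
    show (UT.toWLColor c ℓ (UT.trunc ℓ (unfoldT G (ℓ + 1) u)),
          ((G.neighborFinset u).val.map (unfoldT G ℓ)).map (UT.toWLColor c ℓ))
        = (WL G (fun _ => c) ℓ u, (G.neighborFinset u).val.map (WL G (fun _ => c) ℓ))
    rw [UT.trunc_unfoldT, ih, Multiset.map_map]
    exact congrArg _ (Multiset.map_congr rfl fun w _ => ih w)

end

/-- Starting from a common constant initial coloring, two vertices
receive the same 1-WL color after `ℓ` rounds iff their depth-`ℓ` unfolding trees are
isomorphic as rooted trees. -/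
theorem WL_eq_iff_unfoldingTree_iso {V : Type} [Fintype V] [DecidableEq V]
    (G : SimpleGraph V) [DecidableRel G.Adj] (ℓ : ℕ) (u v : V) :
    WL G (fun _ => ()) ℓ u = WL G (fun _ => ()) ℓ v ↔ unfoldT G ℓ u = unfoldT G ℓ v := by
  constructor
  · intro h
    rw [← WLColorType.toUT_WL G _ ℓ u, ← WLColorType.toUT_WL G _ ℓ v, h]
  · intro h
    rw [← UT.toWLColor_unfoldT G () ℓ u, ← UT.toWLColor_unfoldT G () ℓ v, h]

end RSNN
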